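/- arXiv:math/9902048 — 4 statements merged into one kernel-verified Lean document; each statement's English description precedes it below -/
import Mathlib

section
/- Every element of 𝔹_G can be written as a finite sum of triples, i.e., of elements of the form [x̂, ŷ, ẑ] where x, y, z ∈ G satisfy x·y·z ∈ [G,G]. -/
/-! Modulo `N` one has `-x̂ = x̂⁻¹`, so every element of `𝔹_G` is a single datum
`[x̂₁, …, x̂_q]` with `x₁⋯x_q ∈ [G,G]`. Since `(x₁x₂)^ + (x₁x₂)⁻¹^ ∈ N`, such a datum splits as
`[x̂₁, x̂₂, (x₁x₂)⁻¹^] + [(x₁x₂)^, x̂₃, …, x̂_q]`, and induction on `q` leaves only triples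
(shorter data being padded with trivial classes). -/

namespace SingOrbit

variable (G : Type*) [Group G]

/-- The map from conjugacy classes to the abelianization. -/
def classAb : ConjClasses G → Additive (Abelianization G) :=
  Quotient.lift (fun g : G => Additive.ofMul (Abelianization.of g)) <| by
    intro a b hab
    obtain ⟨c, hc⟩ := isConj_iff.mp (hab : IsConj a b)
    subst hc
    show Additive.ofMul (Abelianization.of a) = Additive.ofMul (Abelianization.of (c * a * c⁻¹))
    congr 1
    rw [map_mul, map_mul, map_inv, mul_comm (Abelianization.of c) (Abelianization.of a),
      mul_inv_cancel_right]

/-- Nontrivial conjugacy classes. -/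
def NCC := {c : ConjClasses G // c ≠ 1}

/-- The homomorphism `φ` from the free abelian group on the nontrivial conjugacy classes
to the abelianization, sending a conjugacy class to the image of any representative. -/
noncomputable def phi : FreeAbelianGroup (NCC G) →+ Additive (Abelianization G) :=
  FreeAbelianGroup.lift fun c => classAb G c.1

/-- The basis element of the free abelian group corresponding to a conjugacy class
(`0` for the trivial class). -/
noncomputable def clsC (c : ConjClasses G) : FreeAbelianGroup (NCC G) :=
  letI := Classical.dec (c = 1)
  if h : c = 1 then 0 else FreeAbelianGroup.of ⟨c, h⟩

/-- The basis element corresponding to the conjugacy class of a group element. -/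
noncomputable def clsF (x : G) : FreeAbelianGroup (NCC G) := clsC G (ConjClasses.mk x)

/-- The subgroup generated by the elements `x̂ + x̂⁻¹`. -/
noncomputable def NSub : AddSubgroup (FreeAbelianGroup (NCC G)) :=
  AddSubgroup.closure {a | ∃ x : G, a = clsF G x + clsF G x⁻¹}

/-- The group `𝔹_G` of singular orbit data: `(ker φ) / N`. -/
noncomputable def SOD := (phi G).ker ⧸ ((NSub G).addSubgroupOf (phi G).ker)

noncomputable instance : AddCommGroup (SOD G) :=
  inferInstanceAs (AddCommGroup ((phi G).ker ⧸ ((NSub G).addSubgroupOf (phi G).ker)))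

variable {G}

lemma classAb_mk (x : G) :
    classAb G (ConjClasses.mk x) = Additive.ofMul (Abelianization.of x) := rfl

lemma mk_eq_one_iff {x : G} : ConjClasses.mk x = 1 ↔ x = 1 := by
  rw [ConjClasses.one_eq_mk_one, ConjClasses.mk_eq_mk_iff_isConj, isConj_one_left]

lemma phi_of (c : NCC G) : phi G (FreeAbelianGroup.of c) = classAb G c.1 :=
  FreeAbelianGroup.lift_apply_of _ _

lemma phi_clsF (x : G) : phi G (clsF G x) = Additive.ofMul (Abelianization.of x) := by
  rw [clsF, clsC]
  split_ifs with h
  · have hx : x = 1 := mk_eq_one_iff.mp h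
    subst hx
    simp
  · exact (phi_of (G := G) ⟨ConjClasses.mk x, h⟩).trans (classAb_mk x)

/-- The element of the free abelian group associated to a list of group elements. -/
noncomputable def sumF (l : List G) : FreeAbelianGroup (NCC G) := (l.map (clsF G)).sum

lemma sumF_nil : sumF ([] : List G) = 0 := rfl

lemma sumF_cons (a : G) (t : List G) : sumF (a :: t) = clsF G a + sumF t := by
  simp [sumF]

lemma phi_sumF (l : List G) :
    phi G (sumF l) = Additive.ofMul (Abelianization.of l.prod) := by
  induction l with
  | nil => simp [sumF_nil]
  | cons a t ih =>
    rw [sumF_cons, map_add, phi_clsF, ih, List.prod_cons, map_mul, ofMul_mul]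

lemma abOf_eq_one_iff {x : G} : Abelianization.of x = 1 ↔ x ∈ commutator G :=
  QuotientGroup.eq_one_iff x

lemma sumF_mem_ker {l : List G} (h : l.prod ∈ commutator G) : sumF l ∈ (phi G).ker := by
  rw [AddMonoidHom.mem_ker, phi_sumF, abOf_eq_one_iff.mpr h]
  rfl

/-- The singular orbit datum `[x̂₁, …, x̂_q]` associated to a list of group elements whose
product lies in the commutator subgroup. -/
noncomputable def data (l : List G) (h : l.prod ∈ commutator G) : SOD G :=
  (QuotientAddGroup.mk ⟨sumF l, sumF_mem_ker h⟩ : SOD G)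

lemma clsF_one : clsF G (1 : G) = 0 :=
  dif_pos (mk_eq_one_iff.mpr rfl)

lemma clsF_out (c : NCC G) : clsF G c.1.out = FreeAbelianGroup.of c := by
  rw [clsF, ConjClasses.mk, c.1.out_eq, clsC, dif_neg c.2]
  rfl

lemma clsF_add_clsF_inv_mem_NSub (x : G) : clsF G x + clsF G x⁻¹ ∈ NSub G :=
  AddSubgroup.subset_closure ⟨x, rfl⟩

lemma NSub_le_ker : NSub G ≤ (phi G).ker := by
  rw [NSub, AddSubgroup.closure_le]
  rintro _ ⟨x, rfl⟩
  rw [SetLike.mem_coe, AddMonoidHom.mem_ker, map_add, phi_clsF, phi_clsF, ← ofMul_mul, ← map_mul,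
    mul_inv_cancel, map_one, ofMul_one]

lemma sumF_singleton (x : G) : sumF [x] = clsF G x := by
  simp [sumF]

lemma sumF_append (l₁ l₂ : List G) : sumF (l₁ ++ l₂) = sumF l₁ + sumF l₂ := by
  simp [sumF]

lemma prod_mem_commutator_of_sumF_mem_ker {l : List G} (h : sumF l ∈ (phi G).ker) :
    l.prod ∈ commutator G := by
  rwa [AddMonoidHom.mem_ker, phi_sumF, ofMul_eq_zero, abOf_eq_one_iff] at h

lemma exists_sub_sumF_mem_NSub (w : FreeAbelianGroup (NCC G)) :
    ∃ l : List G, w - sumF l ∈ NSub G := by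
  induction w using FreeAbelianGroup.induction_on with
  | zero => exact ⟨[], by simp [sumF_nil, zero_mem]⟩
  | of c => exact ⟨[c.1.out], by simp [sumF_singleton, clsF_out, zero_mem]⟩
  | neg c _ =>
    refine ⟨[c.1.out⁻¹], ?_⟩
    have hc : -FreeAbelianGroup.of c - sumF [c.1.out⁻¹]
        = -(clsF G c.1.out + clsF G c.1.out⁻¹) := by
      rw [sumF_singleton, clsF_out]
      abel
    rw [hc]
    exact neg_mem (clsF_add_clsF_inv_mem_NSub _)
  | add a b ha hb =>
    obtain ⟨l₁, h₁⟩ := ha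
    obtain ⟨l₂, h₂⟩ := hb
    refine ⟨l₁ ++ l₂, ?_⟩
    have hab : a + b - sumF (l₁ ++ l₂) = (a - sumF l₁) + (b - sumF l₂) := by
      rw [sumF_append]
      abel
    rw [hab]
    exact add_mem h₁ h₂

lemma mk_eq_mk_iff_sub_mem_NSub {a b : (phi G).ker} :
    (QuotientAddGroup.mk a : SOD G) = QuotientAddGroup.mk b ↔
      (b - a : FreeAbelianGroup (NCC G)) ∈ NSub G := by
  rw [QuotientAddGroup.eq, AddSubgroup.mem_addSubgroupOf, AddSubgroup.coe_add, AddSubgroup.coe_neg,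
    neg_add_eq_sub]

lemma data_eq_data_of_sub_mem {l₁ l₂ : List G} (h₁ : l₁.prod ∈ commutator G)
    (h₂ : l₂.prod ∈ commutator G) (h : sumF l₂ - sumF l₁ ∈ NSub G) :
    data l₁ h₁ = data l₂ h₂ :=
  mk_eq_mk_iff_sub_mem_NSub.mpr h

lemma data_add_data {l₁ l₂ : List G} (h₁ : l₁.prod ∈ commutator G)
    (h₂ : l₂.prod ∈ commutator G) :
    data l₁ h₁ + data l₂ h₂
      = data (l₁ ++ l₂) (by rw [List.prod_append]; exact mul_mem h₁ h₂) :=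
  congrArg QuotientAddGroup.mk (Subtype.ext (sumF_append l₁ l₂).symm)

lemma exists_eq_data (α : SOD G) : ∃ (l : List G) (h : l.prod ∈ commutator G), α = data l h := by
  obtain ⟨⟨w, hw⟩, rfl⟩ := QuotientAddGroup.mk_surjective α
  obtain ⟨l, hl⟩ := exists_sub_sumF_mem_NSub w
  have hker : sumF l ∈ (phi G).ker := by
    simpa using sub_mem hw (NSub_le_ker hl)
  exact ⟨l, prod_mem_commutator_of_sumF_mem_ker hker,
    mk_eq_mk_iff_sub_mem_NSub.mpr (by simpa using neg_mem hl)⟩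

lemma data_cons_cons (a b : G) (t : List G) (h : (a :: b :: t).prod ∈ commutator G) :
    data (a :: b :: t) h
      = data [a, b, (a * b)⁻¹] (by simp)
        + data (a * b :: t) (by simpa [mul_assoc] using h) := by
  rw [data_add_data]
  apply data_eq_data_of_sub_mem
  have hsplit : sumF ([a, b, (a * b)⁻¹] ++ a * b :: t) - sumF (a :: b :: t)
      = clsF G (a * b) + clsF G (a * b)⁻¹ := by
    simp only [sumF_append, sumF_cons, sumF_nil]
    abel
  rw [hsplit]
  exact clsF_add_clsF_inv_mem_NSub _

variable (G) in
def tripleData : Set (SOD G) :=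
  {α | ∃ (x y z : G) (h : ([x, y, z] : List G).prod ∈ commutator G), α = data [x, y, z] h}

lemma data_mem_closure_tripleData :
    ∀ (l : List G) (h : l.prod ∈ commutator G),
      data l h ∈ AddSubmonoid.closure (tripleData G)
  | [], _ => zero_mem _
  | [a], h => AddSubmonoid.subset_closure
      ⟨a, 1, 1, by simpa using h,
        data_eq_data_of_sub_mem _ _ (by simp [sumF_cons, clsF_one, zero_mem])⟩
  | [a, b], h => AddSubmonoid.subset_closure
      ⟨a, b, 1, by simpa using h,
        data_eq_data_of_sub_mem _ _ (by simp [sumF_cons, clsF_one, zero_mem])⟩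
  | a :: b :: c :: t, h => by
    rw [data_cons_cons]
    exact add_mem (AddSubmonoid.subset_closure ⟨a, b, _, _, rfl⟩)
      (data_mem_closure_tripleData (a * b :: c :: t) _)
termination_by l => l.length

lemma exists_sum_fin_of_mem_closure_tripleData {α : SOD G}
    (hα : α ∈ AddSubmonoid.closure (tripleData G)) :
    ∃ (n : ℕ) (x y z : Fin n → G)
      (h : ∀ i, ([x i, y i, z i] : List G).prod ∈ commutator G),
      α = ∑ i, data [x i, y i, z i] (h i) := by
  obtain ⟨L, hL, rfl⟩ := AddSubmonoid.exists_list_of_mem_closure hα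
  choose x y z h hxyz using fun i : Fin L.length => hL L[i] (List.getElem_mem i.2)
  refine ⟨L.length, x, y, z, h, ?_⟩
  rw [← Fin.sum_univ_getElem L]
  exact Finset.sum_congr rfl fun i _ => hxyz i

/-- Every element of `𝔹_G` can be written as a finite sum of triples
`[x̂, ŷ, ẑ]` with `x·y·z ∈ [G,G]`. -/
theorem stmt0 (G : Type*) [Group G] (α : SOD G) :
    ∃ (n : ℕ) (x y z : Fin n → G)
      (h : ∀ i, ([x i, y i, z i] : List G).prod ∈ commutator G),
      α = ∑ i, data [x i, y i, z i] (h i) := by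
  obtain ⟨l, hl, rfl⟩ := exists_eq_data α
  exact exists_sum_fin_of_mem_closure_tripleData (data_mem_closure_tripleData l hl)

end SingOrbit
end

section
/- Let G = S₃ be the symmetric group on three letters and let a ∈ S₃ be a 3-cycle. Then 𝔹_{S₃} is cyclic of order 2, generated by the element [â]. -/
/-!
In `S₃` every element is conjugate to its inverse, so `N` is generated by `2τ̂` and `2â`, where
`τ` is a transposition, and the free abelian group `F` on the two nontrivial classes is spanned by
`τ̂` and `â`. The sign character factors through the abelianization, so `mτ̂ + nâ ∈ ker φ` forces
`m` to be even; hence `mτ̂ + nâ ≡ nâ` modulo `N`, and `[â]` generates `𝔹_{S₃}`. Finally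
`2[â] = 0`, while `[â] ≠ 0` because the coefficient of `â` modulo 2 vanishes on `N`.
-/

namespace SingOrbit

variable (G : Type*) [Group G]

variable {G}

lemma threeCycle_pow_three (a : Equiv.Perm (Fin 3)) (ha : a.IsThreeCycle) : a ^ 3 = 1 := by
  have h := pow_orderOf_eq_one a
  rwa [ha.orderOf] at h

open scoped commutatorElement

lemma threeCycle_mem_commutator (a : Equiv.Perm (Fin 3)) (ha : a.IsThreeCycle) :
    a ∈ commutator (Equiv.Perm (Fin 3)) := by
  have h3 : a ^ 3 = 1 := threeCycle_pow_three a ha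
  have hne : a ≠ 1 := by
    intro h
    have horder := ha.orderOf
    rw [h, orderOf_one] at horder
    exact absurd horder (by norm_num)
  have key : ∀ b : Equiv.Perm (Fin 3), b ^ 3 = 1 → b ≠ 1 →
      ⁅Equiv.swap (0 : Fin 3) 1, b⁆ = b := by decide
  rw [← key a h3 hne, commutator_def]
  exact Subgroup.commutator_mem_commutator (Subgroup.mem_top _) (Subgroup.mem_top _)

lemma clsC_val (c : NCC G) : clsC G c.1 = FreeAbelianGroup.of c :=
  dif_neg c.2

lemma clsF_eq_of_isConj {x y : G} (h : IsConj x y) : clsF G x = clsF G y := by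
  rw [clsF, clsF, ConjClasses.mk_eq_mk_iff_isConj.mpr h]

lemma isConj_inv_inv {x y : G} (h : IsConj x y) : IsConj x⁻¹ y⁻¹ := by
  obtain ⟨c, rfl⟩ := isConj_iff.mp h
  exact isConj_iff.mpr ⟨c, by group⟩

lemma mk_inv_eq_mk_iff {a : G} (hinv : IsConj a a⁻¹) (x : G) :
    ConjClasses.mk x⁻¹ = ConjClasses.mk a ↔ ConjClasses.mk x = ConjClasses.mk a := by
  simp only [ConjClasses.mk_eq_mk_iff_isConj]
  exact ⟨fun h => by simpa using (isConj_inv_inv h).trans hinv.symm,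
    fun h => (isConj_inv_inv h).trans hinv.symm⟩

lemma add_clsF_self_mem_NSub {x : G} (h : IsConj x x⁻¹) : clsF G x + clsF G x ∈ NSub G :=
  AddSubgroup.subset_closure ⟨x, by rw [clsF_eq_of_isConj h]⟩

lemma clsF_mem_ker {x : G} (h : x ∈ commutator G) : clsF G x ∈ (phi G).ker := by
  rw [AddMonoidHom.mem_ker, phi_clsF, abOf_eq_one_iff.mpr h]
  rfl

lemma lift_phi_clsF {A : Type*} [CommGroup A] (f : G →* A) (x : G) :
    MonoidHom.toAdditive (Abelianization.lift f) (phi G (clsF G x)) = Additive.ofMul (f x) := by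
  rw [phi_clsF]
  exact congrArg Additive.ofMul (Abelianization.lift_apply_of f x)

lemma mem_closure_image_clsF {S : Set G} (hS : ∀ x : G, x ≠ 1 → ∃ s ∈ S, IsConj x s)
    (z : FreeAbelianGroup (NCC G)) : z ∈ AddSubgroup.closure (clsF G '' S) := by
  induction z using FreeAbelianGroup.induction_on with
  | zero => exact zero_mem _
  | of c =>
    obtain ⟨x, hx⟩ := ConjClasses.mk_surjective c.1
    have hx1 : x ≠ 1 := fun h => c.2 (by rw [← hx, h, ConjClasses.one_eq_mk_one])
    obtain ⟨s, hs, hxs⟩ := hS x hx1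
    refine AddSubgroup.subset_closure ⟨s, hs, ?_⟩
    rw [← clsF_eq_of_isConj hxs, clsF, hx, clsC_val]
  | neg z hz => exact neg_mem hz
  | add z w hz hw => exact add_mem hz hw

open scoped Classical in
noncomputable def coeffMod2 (a : G) : FreeAbelianGroup (NCC G) →+ ZMod 2 :=
  FreeAbelianGroup.lift fun c => if c.1 = ConjClasses.mk a then 1 else 0

open scoped Classical in
lemma coeffMod2_clsF {a : G} (ha : a ≠ 1) (x : G) :
    coeffMod2 a (clsF G x) = if ConjClasses.mk x = ConjClasses.mk a then 1 else 0 := by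
  by_cases hx : ConjClasses.mk x = 1
  · have hxa : ConjClasses.mk x ≠ ConjClasses.mk a :=
      fun h => ha (mk_eq_one_iff.mp (h ▸ hx))
    rw [if_neg hxa, clsF, clsC, dif_pos hx, map_zero]
  · rw [clsF, clsC, dif_neg hx]
    exact FreeAbelianGroup.lift_apply_of _ _

lemma coeffMod2_eq_zero_of_mem_NSub {a : G} (ha : a ≠ 1) (hinv : IsConj a a⁻¹)
    {z : FreeAbelianGroup (NCC G)} (hz : z ∈ NSub G) : coeffMod2 a z = 0 := by
  induction hz using AddSubgroup.closure_induction with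
  | mem _ hx =>
    obtain ⟨x, rfl⟩ := hx
    rw [map_add, coeffMod2_clsF ha, coeffMod2_clsF ha]
    by_cases hx : ConjClasses.mk x = ConjClasses.mk a
    · rw [if_pos hx, if_pos ((mk_inv_eq_mk_iff hinv x).mpr hx)]
      exact CharTwo.add_self_eq_zero 1
    · rw [if_neg hx, if_neg (mt (mk_inv_eq_mk_iff hinv x).mp hx), add_zero]
  | zero => exact map_zero _
  | add _ _ _ _ hx hy => rw [map_add, hx, hy, add_zero]
  | neg _ _ hx => rw [map_neg, hx, neg_zero]

lemma clsF_notMem_NSub {a : G} (ha : a ≠ 1) (hinv : IsConj a a⁻¹) : clsF G a ∉ NSub G := by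
  intro h
  have h0 := coeffMod2_eq_zero_of_mem_NSub ha hinv h
  rw [coeffMod2_clsF ha, if_pos rfl] at h0
  exact one_ne_zero h0

noncomputable def toSOD : (phi G).ker →+ SOD G :=
  QuotientAddGroup.mk' _

lemma toSOD_surjective : Function.Surjective (toSOD (G := G)) :=
  QuotientAddGroup.mk'_surjective _

lemma toSOD_eq_zero_iff (z : (phi G).ker) :
    toSOD z = 0 ↔ (z : FreeAbelianGroup (NCC G)) ∈ NSub G :=
  (QuotientAddGroup.eq_zero_iff z).trans AddSubgroup.mem_addSubgroupOf

lemma data_singleton {a : G} (h : a ∈ commutator G) :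
    data [a] (by rwa [List.prod_singleton]) = toSOD ⟨clsF G a, clsF_mem_ker h⟩ := by
  change toSOD ⟨sumF [a], _⟩ = _
  congr 2
  simp [sumF]

lemma addOrderOf_data_singleton {a : G} (ha : a ≠ 1) (hinv : IsConj a a⁻¹)
    (h : a ∈ commutator G) : addOrderOf (data [a] (by rwa [List.prod_singleton])) = 2 := by
  rw [data_singleton h]
  refine addOrderOf_eq_prime ?_ ?_
  · rw [← map_nsmul, toSOD_eq_zero_iff, AddSubmonoidClass.coe_nsmul, two_nsmul]
    exact add_clsF_self_mem_NSub hinv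
  · rw [Ne, toSOD_eq_zero_iff]
    exact clsF_notMem_NSub ha hinv

lemma closure_data_singleton_eq_top {a : G} (h : a ∈ commutator G)
    (hgen : ∀ z ∈ (phi G).ker, ∃ n : ℤ, z - n • clsF G a ∈ NSub G) :
    AddSubgroup.closure {data [a] (by rwa [List.prod_singleton])} = ⊤ := by
  rw [AddSubgroup.eq_top_iff']
  intro x
  obtain ⟨⟨z, hz⟩, rfl⟩ := toSOD_surjective x
  obtain ⟨n, hn⟩ := hgen z hz
  refine AddSubgroup.mem_closure_singleton.mpr ⟨n, ?_⟩
  rw [data_singleton h, ← map_zsmul, eq_comm, ← sub_eq_zero, ← map_sub, toSOD_eq_zero_iff]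
  exact hn

section Perm

open Equiv Perm

lemma perm_isConj_inv {α : Type*} [Fintype α] [DecidableEq α] (σ : Perm α) : IsConj σ σ⁻¹ :=
  isConj_iff_cycleType_eq.mpr (cycleType_inv σ).symm

lemma isSwap_or_isThreeCycle {σ : Perm (Fin 3)} (hσ : σ ≠ 1) : σ.IsSwap ∨ σ.IsThreeCycle := by
  have hcard : σ.support.card ≤ 3 := (Finset.card_le_univ _).trans_eq (Fintype.card_fin 3)
  have hne0 : σ.support.card ≠ 0 := by rwa [Ne, Finset.card_eq_zero, support_eq_empty_iff]
  have hne1 := card_support_ne_one σ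
  rw [← card_support_eq_two, ← card_support_eq_three_iff]
  omega

lemma isConj_swap_or_isConj_of_isThreeCycle {a : Perm (Fin 3)} (ha : a.IsThreeCycle)
    {σ : Perm (Fin 3)} (hσ : σ ≠ 1) :
    ∃ s ∈ ({swap 0 1, a} : Set (Perm (Fin 3))), IsConj σ s := by
  rcases isSwap_or_isThreeCycle hσ with ⟨x, y, hxy, rfl⟩ | hσ3
  · exact ⟨swap 0 1, Or.inl rfl, isConj_swap hxy (by decide)⟩
  · exact ⟨a, Or.inr rfl, isConj_iff_cycleType_eq.mpr (hσ3.cycleType.trans ha.cycleType.symm)⟩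

lemma even_of_zsmul_add_zsmul_mem_ker {a : Perm (Fin 3)} (ha : a.IsThreeCycle) {m n : ℤ}
    (hz : m • clsF _ (swap 0 1) + n • clsF _ a ∈ (phi (Perm (Fin 3))).ker) : Even m := by
  have hsign := congrArg (MonoidHom.toAdditive (Abelianization.lift sign)) hz
  rw [map_add, map_zsmul, map_zsmul, map_add, map_zsmul, map_zsmul, lift_phi_clsF,
    lift_phi_clsF, sign_swap (by decide), ha.sign, map_zero] at hsign
  rw [← ofMul_zpow, ← ofMul_zpow, one_zpow, ← ofMul_mul, mul_one, ofMul_eq_zero,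
    neg_one_zpow_eq_ite] at hsign
  by_contra hodd
  rw [if_neg hodd] at hsign
  exact absurd hsign (by decide)

lemma exists_sub_zsmul_clsF_mem_NSub {a : Perm (Fin 3)} (ha : a.IsThreeCycle) :
    ∀ z ∈ (phi (Perm (Fin 3))).ker, ∃ n : ℤ, z - n • clsF _ a ∈ NSub (Perm (Fin 3)) := by
  intro z hz
  have hspan :=
    mem_closure_image_clsF (fun _ hσ => isConj_swap_or_isConj_of_isThreeCycle ha hσ) z
  rw [Set.image_pair, AddSubgroup.mem_closure_pair] at hspan
  obtain ⟨m, n, rfl⟩ := hspan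
  obtain ⟨k, rfl⟩ := even_of_zsmul_add_zsmul_mem_ker ha hz
  refine ⟨n, ?_⟩
  rw [add_sub_cancel_right, add_zsmul, ← smul_add]
  exact zsmul_mem (add_clsF_self_mem_NSub (perm_isConj_inv _)) k

end Perm

/-- for `G = S₃` and `a` a 3-cycle, `𝔹_{S₃}` is cyclic of order 2,
generated by `[â]`. -/
theorem stmt8 (a : Equiv.Perm (Fin 3)) (ha : a.IsThreeCycle) :
    AddSubgroup.closure
        {data [a] (by rw [List.prod_singleton]; exact threeCycle_mem_commutator a ha)} = ⊤ ∧
    addOrderOf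
        (data [a] (by rw [List.prod_singleton]; exact threeCycle_mem_commutator a ha)) = 2 :=
  ⟨closure_data_singleton_eq_top (threeCycle_mem_commutator a ha)
      (exists_sub_zsmul_clsF_mem_NSub ha),
    addOrderOf_data_singleton ha.ne_one (perm_isConj_inv a) (threeCycle_mem_commutator a ha)⟩

end SingOrbit
end

section
/- For a finite group G, the group of singular orbit data 𝔹_G is the trivial group if and only if G is the trivial group or G is cyclic of order 2. -/
/-! A weight `w` on conjugacy classes with `w 1 = 0` and `w ŷ + w ŷ⁻¹ = 0` for all `y` vanishes
on `N`, so a datum on which such a weight is nonzero is a nonzero element of `𝔹_G`.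
If some `x` is not conjugate to `x⁻¹`, the weight `[x̂] - [x̂⁻¹]` is nonzero on `|G| • x̂`.
Otherwise `ŷ⁻¹ = ŷ` for all `y`, and the mod 2 coefficient of a nontrivial class `x̂` is such a
weight: it detects `x̂` for `1 ≠ x ∈ [G, G]`, and, when `G` is abelian (hence of exponent 2) of
order `> 2`, the datum `x̂ + ŷ + (xy)^`.
Conversely, for `G` trivial the free group is `0`, and for `G` of order 2 with generator `x` the
kernel of `φ` is `2ℤ • x̂`, generated by `x̂ + x̂⁻¹ = 2 • x̂`. -/

namespace SingOrbit

variable (G : Type*) [Group G]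

variable {G}

lemma mk_inv_eq_mk_inv_iff {a b : G} :
    ConjClasses.mk a⁻¹ = ConjClasses.mk b⁻¹ ↔ ConjClasses.mk a = ConjClasses.mk b := by
  simp only [ConjClasses.mk_eq_mk_iff_isConj, isConj_iff, ← conj_inv, inv_inj]

lemma mk_inv_eq_mk_iff_eq_mk_inv {a b : G} :
    ConjClasses.mk a⁻¹ = ConjClasses.mk b ↔ ConjClasses.mk a = ConjClasses.mk b⁻¹ := by
  rw [← mk_inv_eq_mk_inv_iff, inv_inv]

lemma data_eq_zero_iff {l : List G} (hl : l.prod ∈ commutator G) :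
    data l hl = 0 ↔ sumF l ∈ NSub G :=
  (QuotientAddGroup.eq_zero_iff _).trans AddSubgroup.mem_addSubgroupOf

section Weight

variable {A : Type*} [AddCommGroup A] (w : ConjClasses G → A)

noncomputable def weightHom : FreeAbelianGroup (NCC G) →+ A :=
  FreeAbelianGroup.lift fun c => w c.1

variable {w}

lemma weightHom_clsF (hw : w 1 = 0) (y : G) :
    weightHom w (clsF G y) = w (ConjClasses.mk y) := by
  rw [clsF, clsC]
  split_ifs with h
  · rw [map_zero, h, hw]
  · exact FreeAbelianGroup.lift_apply_of _ _

lemma weightHom_sumF (hw : w 1 = 0) (l : List G) :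
    weightHom w (sumF l) = (l.map fun y => w (ConjClasses.mk y)).sum := by
  rw [sumF, map_list_sum, List.map_map]
  exact congrArg List.sum (List.map_congr_left fun y _ => weightHom_clsF hw y)

lemma nSub_le_ker_weightHom (hw : w 1 = 0)
    (hinv : ∀ y : G, w (ConjClasses.mk y) + w (ConjClasses.mk y⁻¹) = 0) :
    NSub G ≤ (weightHom w).ker := by
  rw [NSub, AddSubgroup.closure_le]
  rintro _ ⟨y, rfl⟩
  rw [SetLike.mem_coe, AddMonoidHom.mem_ker, map_add, weightHom_clsF hw, weightHom_clsF hw, hinv]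

lemma data_ne_zero_of_weight (hw : w 1 = 0)
    (hinv : ∀ y : G, w (ConjClasses.mk y) + w (ConjClasses.mk y⁻¹) = 0)
    {l : List G} (hl : l.prod ∈ commutator G)
    (hsum : (l.map fun y => w (ConjClasses.mk y)).sum ≠ 0) : data l hl ≠ 0 := by
  intro h0
  rw [data_eq_zero_iff] at h0
  exact hsum ((weightHom_sumF hw l).symm.trans (nSub_le_ker_weightHom hw hinv h0))

end Weight

lemma exists_sod_ne_zero_of_not_isConj_inv [Finite G] {x : G} (hx : ¬IsConj x x⁻¹) :
    ∃ α : SOD G, α ≠ 0 := by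
  classical
  have hx1 : x ≠ 1 := by rintro rfl; exact hx (by simp)
  have hxx : ConjClasses.mk x ≠ ConjClasses.mk x⁻¹ := fun h =>
    hx (ConjClasses.mk_eq_mk_iff_isConj.mp h)
  have hl : (List.replicate (Nat.card G) x).prod ∈ commutator G := by
    rw [List.prod_replicate, pow_card_eq_one']
    exact one_mem _
  let w : ConjClasses G → ℤ := fun c =>
    (if c = ConjClasses.mk x then 1 else 0) - (if c = ConjClasses.mk x⁻¹ then 1 else 0)
  refine ⟨data _ hl, data_ne_zero_of_weight (w := w) ?_ ?_ hl ?_⟩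
  · simp [w, eq_comm (a := (1 : ConjClasses G)), mk_eq_one_iff, hx1]
  · intro y
    simp only [w, mk_inv_eq_mk_iff_eq_mk_inv, inv_inv]
    ring
  · simp [w, hxx, Nat.card_pos.ne']

lemma data_ne_zero_of_forall_isConj_inv (hreal : ∀ y : G, IsConj y y⁻¹)
    [DecidableEq (ConjClasses G)] {x : G} (hx : x ≠ 1)
    {l : List G} (hl : l.prod ∈ commutator G)
    (hodd : (l.map fun y => if ConjClasses.mk y = ConjClasses.mk x then (1 : ZMod 2) else 0).sum
      ≠ 0) :
    data l hl ≠ 0 := by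
  refine data_ne_zero_of_weight (w := fun c => if c = ConjClasses.mk x then 1 else 0) ?_
    (fun y => ?_) hl hodd
  · simp [eq_comm (a := (1 : ConjClasses G)), mk_eq_one_iff, hx]
  · rw [ConjClasses.mk_eq_mk_iff_isConj.mpr (hreal y).symm]
    exact CharTwo.add_self_eq_zero _

lemma exists_sod_ne_zero_of_commutator_ne_bot (hreal : ∀ y : G, IsConj y y⁻¹)
    (h : commutator G ≠ ⊥) : ∃ α : SOD G, α ≠ 0 := by
  classical
  obtain ⟨x, hx, hx1⟩ := (commutator G).bot_or_exists_ne_one.resolve_left h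
  have hl : [x].prod ∈ commutator G := by simpa using hx
  exact ⟨data _ hl, data_ne_zero_of_forall_isConj_inv hreal hx1 hl (by simp)⟩

lemma exists_sod_ne_zero_of_commutator_eq_bot (hreal : ∀ y : G, IsConj y y⁻¹)
    (h : commutator G = ⊥) {x y : G}
    (hx : x ≠ 1) (hy : y ≠ 1) (hxy : x ≠ y) : ∃ α : SOD G, α ≠ 0 := by
  classical
  have hcomm : ∀ a b : G, a * b = b * a := ((commutator_eq_bot_iff G).mp h).is_comm.comm
  have mk_inj : ∀ {a b : G}, ConjClasses.mk a = ConjClasses.mk b → a = b := fun hab => by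
    obtain ⟨c, rfl⟩ := isConj_iff.mp (ConjClasses.mk_eq_mk_iff_isConj.mp hab)
    rw [hcomm c, mul_inv_cancel_right]
  have hsq : (x * y) * (x * y) = 1 :=
    mul_eq_one_iff_eq_inv.mpr (mk_inj (ConjClasses.mk_eq_mk_iff_isConj.mpr (hreal (x * y))))
  have hl : [x, y, x * y].prod ∈ commutator G := by
    rw [List.prod_cons, List.prod_cons, List.prod_singleton, ← mul_assoc, hsq]
    exact one_mem _
  refine ⟨data _ hl, data_ne_zero_of_forall_isConj_inv hreal hx hl ?_⟩
  have hyx : ConjClasses.mk y ≠ ConjClasses.mk x := fun he => hxy (mk_inj he).symm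
  have hxyx : ConjClasses.mk (x * y) ≠ ConjClasses.mk x := fun he => hy (by simpa using mk_inj he)
  simp [hyx, hxyx]

lemma sod_eq_zero_of_ker_le (h : (phi G).ker ≤ NSub G) (α : SOD G) : α = 0 := by
  induction α using QuotientAddGroup.induction_on with
  | H a => exact (QuotientAddGroup.eq_zero_iff _).mpr (AddSubgroup.mem_addSubgroupOf.mpr (h a.2))

lemma ker_phi_le_nSub_of_subsingleton [Subsingleton G] : (phi G).ker ≤ NSub G := by
  have : IsEmpty (NCC G) := ⟨fun ⟨c, hc⟩ => by
    obtain ⟨g, rfl⟩ := ConjClasses.mk_surjective c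
    exact hc (mk_eq_one_iff.mpr (Subsingleton.elim g 1))⟩
  intro a _
  rw [Subsingleton.elim a 0]
  exact zero_mem _

lemma ker_phi_le_nSub_of_card_eq_two (h : Nat.card G = 2) : (phi G).ker ≤ NSub G := by
  obtain ⟨x, hx, huniq⟩ := (Nat.card_eq_two_iff' (1 : G)).mp h
  have hxinv : x⁻¹ = x := huniq _ (inv_ne_one.mpr hx)
  have hof : ∀ c : NCC G, FreeAbelianGroup.of c = clsF G x := by
    rintro ⟨c, hc⟩
    obtain ⟨g, rfl⟩ := ConjClasses.mk_surjective c
    obtain rfl : g = x := huniq g fun hg => hc (mk_eq_one_iff.mpr hg)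
    rw [clsF, clsC, dif_neg hc]
  have hmult (a : FreeAbelianGroup (NCC G)) : a ∈ AddSubgroup.zmultiples (clsF G x) :=
    FreeAbelianGroup.induction_on a (zero_mem _) (fun c => hof c ▸ AddSubgroup.mem_zmultiples _)
      (fun _ => neg_mem) (fun _ _ => add_mem)
  have hcomm : commutator G = ⊥ :=
    haveI := isCyclic_of_prime_card h
    commutator_eq_bot G
  have horder : orderOf (Abelianization.of x) = 2 := by
    refine orderOf_eq_prime ?_ ?_
    · rw [← map_pow, pow_two, mul_eq_one_iff_eq_inv.mpr hxinv.symm, map_one]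
    · rwa [Ne, abOf_eq_one_iff, hcomm, Subgroup.mem_bot]
  intro a ha
  obtain ⟨n, rfl⟩ := AddSubgroup.mem_zmultiples_iff.mp (hmult a)
  rw [AddMonoidHom.mem_ker, map_zsmul, phi_clsF, ← ofMul_zpow, ofMul_eq_zero,
    ← orderOf_dvd_iff_zpow_eq_one, horder] at ha
  obtain ⟨k, rfl⟩ := ha
  rw [mul_comm, mul_zsmul, Nat.cast_ofNat, two_zsmul]
  nth_rewrite 2 [← hxinv]
  exact AddSubgroup.zsmul_mem _ (AddSubgroup.subset_closure ⟨x, rfl⟩ : _ ∈ NSub G) k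

lemma exists_ne_one_ne_of_card_ne_two (h : Nat.card G ≠ 2) {x : G} (hx : x ≠ 1) :
    ∃ y : G, y ≠ 1 ∧ y ≠ x := by
  by_contra! hG
  exact h ((Nat.card_eq_two_iff' 1).mpr ⟨x, hx, hG⟩)

lemma exists_sod_ne_zero [Finite G] [Nontrivial G] (h : Nat.card G ≠ 2) :
    ∃ α : SOD G, α ≠ 0 := by
  by_cases hreal : ∀ y : G, IsConj y y⁻¹
  · by_cases hcomm : commutator G = ⊥
    · obtain ⟨x, hx⟩ := exists_ne (1 : G)
      obtain ⟨y, hy, hyx⟩ := exists_ne_one_ne_of_card_ne_two h hx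
      exact exists_sod_ne_zero_of_commutator_eq_bot hreal hcomm hx hy hyx.symm
    · exact exists_sod_ne_zero_of_commutator_ne_bot hreal hcomm
  · obtain ⟨x, hx⟩ := not_forall.mp hreal
    exact exists_sod_ne_zero_of_not_isConj_inv hx

/-- `𝔹_G` is trivial if and only if `G` is trivial or `G ≅ C₂`. -/
theorem stmt14 (G : Type*) [Group G] [Finite G] :
    (∀ α : SOD G, α = 0) ↔
      (Subsingleton G ∨ Nonempty (G ≃* Multiplicative (ZMod 2))) := by
  have hC₂ : Nonempty (G ≃* Multiplicative (ZMod 2)) ↔ Nat.card G = 2 :=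
    ⟨fun ⟨e⟩ => (Nat.card_congr e.toEquiv).trans (by simp),
      fun h => ⟨mulEquivOfPrimeCardEq h (by simp)⟩⟩
  rw [hC₂]
  constructor
  · intro h
    by_contra! ⟨_, hcard⟩
    obtain ⟨α, hα⟩ := exists_sod_ne_zero hcard
    exact hα (h α)
  · rintro (_ | hcard)
    · exact sod_eq_zero_of_ker_le ker_phi_le_nSub_of_subsingleton
    · exact sod_eq_zero_of_ker_le (ker_phi_le_nSub_of_card_eq_two hcard)

end SingOrbit
end

section
/- For a finite group G, every element α of 𝔹_G satisfies 2α = 0 if and only if every complex character of G takes values in ℝ (equivalently, every character χ of a finite-dimensional complex representation of G satisfies χ(g) ∈ ℝ for all g ∈ G). -/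
universe u

open Module LinearMap Finset

lemma pow_sub_one_eq_inv {α : Type*} [DivisionMonoid α] {a : α} {n : ℕ} (hn : n ≠ 0)
    (ha : a ^ n = 1) : a ^ (n - 1) = a⁻¹ :=
  (inv_eq_of_mul_eq_one_left ((pow_sub_one_mul hn a).trans ha)).symm

section Conj

variable {G : Type*} [Group G]

lemma IsConj.inv {a b : G} (h : IsConj a b) : IsConj a⁻¹ b⁻¹ := by
  obtain ⟨c, rfl⟩ := isConj_iff.mp h
  exact isConj_iff.mpr ⟨c, by group⟩

lemma isConj_inv_left_iff {a b : G} : IsConj a⁻¹ b ↔ IsConj a b⁻¹ :=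
  ⟨fun h => by simpa using h.inv, fun h => by simpa using h.inv⟩

end Conj

namespace Module.End

lemma pow_apply_of_mem_eigenspace {R M : Type*} [CommRing R] [AddCommGroup M] [Module R M]
    {f : End R M} {μ : R} {v : M} (hv : v ∈ f.eigenspace μ) (k : ℕ) :
    (f ^ k) v = μ ^ k • v := by
  rcases eq_or_ne v 0 with rfl | hv0
  · simp
  · exact HasEigenvector.pow_apply ⟨hv, hv0⟩ k

/-- `f` is diagonalizable because `X ^ n - 1` is separable, and `f ^ k` acts on its
`μ`-eigenspace as the scalar `μ ^ k`. -/
lemma exists_trace_mul_pow_eq_sum_eigenspace {K V : Type*} [Field K] [IsAlgClosed K]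
    [AddCommGroup V] [Module K V] [FiniteDimensional K V] {f g : End K V} {n : ℕ}
    (hn : (n : K) ≠ 0) (hf : f ^ n = 1) (hfg : Commute f g) :
    ∃ s : Finset K, (∀ μ ∈ s, μ ^ n = 1) ∧ ∀ k : ℕ, trace K V (g * f ^ k) =
      ∑ μ ∈ s, μ ^ k * trace K _ (g.restrict (mapsTo_genEigenspace_of_comm hfg μ 1)) := by
  classical
  have hss : f.IsSemisimple := by
    refine isSemisimple_of_squarefree_aeval_eq_zero
      (Polynomial.separable_X_pow_sub_C 1 hn one_ne_zero).squarefree ?_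
    simp [hf]
  have hind : iSupIndep f.eigenspace := independent_genEigenspace f 1
  have hint : DirectSum.IsInternal f.eigenspace :=
    (DirectSum.isInternal_submodule_iff_iSupIndep_and_iSup_eq_top _).mpr
      ⟨hind, hss.iSup_eigenspace_eq_top⟩
  have hfin : {μ | f.eigenspace μ ≠ ⊥}.Finite := WellFoundedGT.finite_ne_bot_of_iSupIndep hind
  refine ⟨hfin.toFinset, fun μ hμ => ?_, fun k => ?_⟩
  · obtain ⟨v, hv, hv0⟩ := Submodule.exists_mem_ne_zero_of_ne_bot (hfin.mem_toFinset.mp hμ)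
    have hfnv := pow_apply_of_mem_eigenspace hv n
    rw [hf, one_apply] at hfnv
    exact smul_left_injective K hv0 (hfnv.symm.trans (one_smul K v).symm)
  · have hmaps : ∀ μ, Set.MapsTo (g * f ^ k) (f.eigenspace μ) (f.eigenspace μ) := fun μ =>
      (mapsTo_genEigenspace_of_comm hfg μ 1).comp
        (mapsTo_genEigenspace_of_comm ((Commute.refl f).pow_right k) μ 1)
    rw [trace_eq_sum_trace_restrict' hint hfin hmaps]
    refine sum_congr rfl fun μ _ => ?_
    have hrestrict : (g * f ^ k).restrict (hmaps μ) =
        μ ^ k • g.restrict (mapsTo_genEigenspace_of_comm hfg μ 1) := by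
      ext ⟨v, hv⟩
      show g ((f ^ k) v) = μ ^ k • g v
      rw [pow_apply_of_mem_eigenspace hv, map_smul]
    rw [hrestrict, map_smul, smul_eq_mul]

/-- The eigenvalues of `f` are roots of unity, so `star μ = μ⁻¹ = μ ^ (n - 1)`. -/
lemma star_trace_mul_eq_trace_mul_pow_pred {V : Type*} [AddCommGroup V] [Module ℂ V]
    [FiniteDimensional ℂ V] {f g : End ℂ V} {n : ℕ} (hn : n ≠ 0) (hf : f ^ n = 1)
    (hfg : Commute f g)
    (hg : ∀ μ, star (trace ℂ _ (g.restrict (mapsTo_genEigenspace_of_comm hfg μ 1))) =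
      trace ℂ _ (g.restrict (mapsTo_genEigenspace_of_comm hfg μ 1))) :
    star (trace ℂ V (g * f)) = trace ℂ V (g * f ^ (n - 1)) := by
  obtain ⟨s, hs, htr⟩ := exists_trace_mul_pow_eq_sum_eigenspace (Nat.cast_ne_zero.mpr hn) hf hfg
  have htr1 := htr 1
  rw [pow_one] at htr1
  rw [htr1, htr, star_sum]
  refine sum_congr rfl fun μ hμ => ?_
  have hstar : star μ = μ ^ (n - 1) := by
    rw [pow_sub_one_eq_inv hn (hs μ hμ),
      Complex.inv_eq_conj (Complex.norm_eq_one_of_pow_eq_one (hs μ hμ) hn)]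
    rfl
  rw [star_mul', hg, pow_one, hstar]

end Module.End

lemma FDRep.star_character {G : Type} [Group G] [Finite G] (V : FDRep ℂ G) (g : G) :
    star (V.character g) = V.character g⁻¹ := by
  have hn := (orderOf_pos g).ne'
  have h := Module.End.star_trace_mul_eq_trace_mul_pow_pred hn
    (by rw [← map_pow, pow_orderOf_eq_one, map_one]) (Commute.one_right (V.ρ g))
    fun μ => by
      rw [show (1 : Module.End ℂ V).restrict (Module.End.mapsTo_genEigenspace_of_comm
        (Commute.one_right (V.ρ g)) μ 1) = 1 from LinearMap.ext fun _ => rfl]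
      simp
  rwa [one_mul, one_mul, ← map_pow, pow_sub_one_eq_inv hn (pow_orderOf_eq_one g)] at h

lemma Representation.star_trace_mul_eq_of_forall_character_real {G : Type} [Group G]
    (hreal : ∀ (W : FDRep ℂ G) (g : G), ∃ r : ℝ, W.character g = (r : ℂ))
    {V : Type} [AddCommGroup V] [Module ℂ V] [FiniteDimensional ℂ V] (ρ : Representation ℂ G V)
    {T : Module.End ℂ V} (hT : ∀ g, Commute T (ρ g)) {n : ℕ} (hn : n ≠ 0) (hTn : T ^ n = 1)
    (a : G) : star (trace ℂ V (ρ a * T)) = trace ℂ V (ρ a * T ^ (n - 1)) := by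
  refine Module.End.star_trace_mul_eq_trace_mul_pow_pred hn hTn (hT a) fun μ => ?_
  let W : Subrepresentation ρ :=
    ⟨T.eigenspace μ, fun g _ hv => Module.End.mapsTo_genEigenspace_of_comm (hT g) μ 1 hv⟩
  obtain ⟨r, hr⟩ := hreal (FDRep.of W.toRepresentation) a
  change trace ℂ _ ((ρ a).restrict (Module.End.mapsTo_genEigenspace_of_comm (hT a) μ 1)) = _
    at hr
  rw [hr, Complex.star_def, Complex.conj_ofReal]

namespace TannakaDuality.FiniteGroup

variable {k G : Type u} [CommRing k] [Group G]

lemma commute_leftRegular_rightRegular (s t : G) :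
    Commute (leftRegular (k := k) s) (rightRegular t) :=
  LinearMap.ext fun f => funext fun y => by simp [mul_assoc]

lemma trace_rightRegular_mul_leftRegular [Fintype G] [DecidableEq G] (a h : G) :
    trace k (G → k) (rightRegular a * leftRegular h) = #{y | h⁻¹ * y * a = y} := by
  rw [trace_eq_matrix_trace k (Pi.basisFun k G), Matrix.trace]
  simp [Pi.single_apply, sum_boole, mul_assoc]

end TannakaDuality.FiniteGroup

open TannakaDuality.FiniteGroup in
lemma isConj_inv_of_forall_character_real {G : Type} [Group G] [Finite G]
    (hreal : ∀ (W : FDRep ℂ G) (g : G), ∃ r : ℝ, W.character g = (r : ℂ)) (x : G) :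
    IsConj x x⁻¹ := by
  classical
  have := Fintype.ofFinite G
  have hn := (orderOf_pos x).ne'
  have key := Representation.star_trace_mul_eq_of_forall_character_real hreal rightRegular
    (fun g => commute_leftRegular_rightRegular x g) hn
    (by rw [← map_pow, pow_orderOf_eq_one, map_one]) x
  rw [← map_pow, pow_sub_one_eq_inv hn (pow_orderOf_eq_one x), trace_rightRegular_mul_leftRegular,
    trace_rightRegular_mul_leftRegular, inv_inv, star_natCast, Nat.cast_inj] at key
  have hone : (1 : G) ∈ ({y | x⁻¹ * y * x = y} : Finset G) := by simp
  obtain ⟨y, hy⟩ := card_pos.mp (key ▸ card_pos.mpr ⟨1, hone⟩)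
  simp only [mem_filter, mem_univ, true_and] at hy
  have hxy : x * y = y * x⁻¹ := eq_mul_inv_of_mul_eq hy
  exact isConj_iff.mpr ⟨y⁻¹, by rw [inv_inv, mul_assoc, hxy, ← mul_assoc, inv_mul_cancel, one_mul]⟩

lemma forall_isConj_inv_iff_forall_character_real {G : Type} [Group G] [Finite G] :
    (∀ x : G, IsConj x x⁻¹) ↔ ∀ (V : FDRep ℂ G) (g : G), ∃ r : ℝ, V.character g = (r : ℂ) := by
  refine ⟨fun h V g => ⟨(V.character g).re, ?_⟩, isConj_inv_of_forall_character_real⟩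
  obtain ⟨c, hc⟩ := isConj_iff.mp (h g)
  have hstar : star (V.character g) = V.character g := by
    rw [FDRep.star_character, ← hc, FDRep.char_conj]
  exact (Complex.conj_eq_iff_re.mp hstar).symm

namespace SingOrbit

variable {G : Type*} [Group G]

lemma nsmul_mk_eq_zero_iff (m : ℕ) (a : (phi G).ker) :
    m • (QuotientAddGroup.mk a : SOD G) = 0 ↔ m • (a : FreeAbelianGroup (NCC G)) ∈ NSub G := by
  rw [← QuotientAddGroup.mk_nsmul]
  exact (QuotientAddGroup.eq_zero_iff _).trans AddSubgroup.mem_addSubgroupOf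

lemma exists_clsF_eq_of (c : NCC G) : ∃ x : G, clsF G x = FreeAbelianGroup.of c := by
  obtain ⟨x, hx⟩ := ConjClasses.exists_rep c.1
  refine ⟨x, ?_⟩
  rw [clsF, clsC, dif_neg (hx ▸ c.2)]
  exact congrArg _ (Subtype.ext hx)

lemma two_nsmul_mem_NSub (amb : ∀ x : G, IsConj x x⁻¹) (a : FreeAbelianGroup (NCC G)) :
    2 • a ∈ NSub G := by
  induction a using FreeAbelianGroup.induction_on with
  | zero => simp [(NSub G).zero_mem]
  | of c =>
    obtain ⟨x, hx⟩ := exists_clsF_eq_of c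
    have hinv : clsF G x⁻¹ = clsF G x := by
      rw [clsF, ConjClasses.mk_eq_mk_iff_isConj.mpr (amb x).symm, ← clsF]
    rw [← hx, two_nsmul]
    nth_rewrite 2 [← hinv]
    exact AddSubgroup.subset_closure ⟨x, rfl⟩
  | neg c h => simpa only [smul_neg] using (NSub G).neg_mem h
  | add a b ha hb => simpa only [smul_add] using (NSub G).add_mem ha hb

noncomputable def conjCount (x : G) : FreeAbelianGroup (NCC G) →+ ℤ :=
  open Classical in
  FreeAbelianGroup.lift fun c =>
    (if c.1 = ConjClasses.mk x then 1 else 0) - (if c.1 = ConjClasses.mk x⁻¹ then 1 else 0)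

open Classical in
lemma conjCount_clsF (x y : G) :
    conjCount x (clsF G y) =
      (if IsConj y x then 1 else 0) - (if IsConj y⁻¹ x then 1 else 0) := by
  by_cases hy : y = 1
  · simp [hy, clsF, clsC, mk_eq_one_iff]
  · rw [clsF, clsC, dif_neg (mt mk_eq_one_iff.mp hy)]
    refine (FreeAbelianGroup.lift_apply_of _ _).trans ?_
    simp only [ConjClasses.mk_eq_mk_iff_isConj, isConj_inv_left_iff]

lemma NSub_le_ker_conjCount (x : G) : NSub G ≤ (conjCount x).ker := by
  refine (AddSubgroup.closure_le _).mpr ?_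
  rintro _ ⟨y, rfl⟩
  rw [SetLike.mem_coe, AddMonoidHom.mem_ker, map_add, conjCount_clsF, conjCount_clsF, inv_inv,
    sub_add_sub_cancel', sub_self]

lemma isConj_inv_of_two_nsmul_eq_zero [Finite G] (h : ∀ α : SOD G, 2 • α = 0) (x : G) :
    IsConj x x⁻¹ := by
  classical
  by_contra hx
  have hker : orderOf x • clsF G x ∈ (phi G).ker := by
    rw [AddMonoidHom.mem_ker, map_nsmul, phi_clsF, ← ofMul_pow, ← map_pow, pow_orderOf_eq_one,
      map_one, ofMul_one]
  have hcount := NSub_le_ker_conjCount x ((nsmul_mk_eq_zero_iff 2 ⟨_, hker⟩).mp (h _))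
  rw [AddMonoidHom.mem_ker, map_nsmul, map_nsmul, conjCount_clsF, if_pos (IsConj.refl x),
    if_neg (fun h' => hx (isConj_inv_left_iff.mp h'))] at hcount
  simp only [sub_zero, nsmul_eq_mul, mul_one] at hcount
  have := (orderOf_pos x).ne'
  omega

lemma two_nsmul_eq_zero_iff_forall_isConj_inv [Finite G] :
    (∀ α : SOD G, 2 • α = 0) ↔ ∀ x : G, IsConj x x⁻¹ := by
  refine ⟨isConj_inv_of_two_nsmul_eq_zero, fun amb α => ?_⟩
  obtain ⟨a, rfl⟩ := QuotientAddGroup.mk_surjective α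
  exact (nsmul_mk_eq_zero_iff 2 a).mpr (two_nsmul_mem_NSub amb a)

/-- `𝔹_G` consists of elements of order dividing two if and only if every
complex character of `G` takes real values. -/
theorem stmt15 (G : Type) [Group G] [Finite G] :
    (∀ α : SOD G, 2 • α = 0) ↔
      (∀ (V : FDRep ℂ G) (g : G), ∃ r : ℝ, V.character g = (r : ℂ)) :=
  two_nsmul_eq_zero_iff_forall_isConj_inv.trans forall_isConj_inv_iff_forall_character_real

end SingOrbit
end
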